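/- Distribution of the ball counts in a set under the balls-into-bins mechanism: let m, s, k, n be positive integers with s ≤ m, p ∈ [0,1], and let S ⊆ [m] with |S| = s. Let W = (w₁,…,w_m) be the random occupancy vector of M^BIB(m,s,k,n,p) on input S. Then (i) the random variable ∑_{i∈S} w_i is distributed as 1 + X + X', where X ~ Binomial(k, s/m) and X' ~ Binomial(n, p·s/m) are independent; and (ii) for any other set S' ⊆ [m] with |S'| = s, the random variable ∑_{i∈S'} w_i is distributed as Z + X + X', where Z is a Bernoulli random variable with success probability |S ∩ S'|/s, X ~ Binomial(k, s/m), X' ~ Binomial(n, p·s/m), and Z, X, X' are independent. -/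

import Mathlib

/-!
The number of balls in a set `T` is additive in the multiset of placed balls, so its law under the
mechanism is the convolution of the laws of the contributions of the real ball, of the `k` noisy
balls and of the `n` trials. A uniformly placed ball lands in `T` with probability `P(T)` and a
trial puts a ball in `T` with probability `p · P(T)`; sums of independent copies of these
Bernoulli contributions are binomial. For `T = S` the real ball lands in `T` almost surely.
-/

open scoped ENNReal

noncomputable def uniformBin (m : ℕ) (hm : 0 < m) : PMF (Fin m) :=
  PMF.uniformOfFinset Finset.univ
    (Finset.univ_nonempty_iff.mpr (Fin.pos_iff_nonempty.mp hm))

/-- Sum of `n` independent copies of a random multiset. -/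
noncomputable def repeatPMF {α : Type*} (ν : PMF (Multiset α)) : ℕ → PMF (Multiset α)
  | 0 => PMF.pure 0
  | n + 1 => ν.bind fun s => (repeatPMF ν n).map (s + ·)

/-- The Bernoulli `PMF` on `Bool` with an `ℝ≥0∞` parameter (the old `PMF.bernoulli`). -/
noncomputable def bernoulliENNReal (p : ℝ≥0∞) (h : p ≤ 1) : PMF Bool :=
  PMF.ofFintype (fun b => cond b p (1 - p)) (by simp [h])

/-- With probability `p`, one draw from `ν`; otherwise nothing. -/
noncomputable def trialM {α : Type*} (ν : PMF α) (p : ℝ≥0∞) (hp : p ≤ 1) : PMF (Multiset α) :=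
  (bernoulliENNReal p hp).bind fun b => if b then ν.map (fun x => {x}) else PMF.pure 0

/-- The balls-into-bins mechanism. -/
noncomputable def MBIB (m k n : ℕ) (hm : 0 < m) (p : ℝ≥0∞) (hp : p ≤ 1)
    (S : Finset (Fin m)) (hS : S.Nonempty) : PMF (Multiset (Fin m)) :=
  (PMF.uniformOfFinset S hS).bind fun x =>
    (repeatPMF ((uniformBin m hm).map (fun y => {y})) k).bind fun A =>
      (repeatPMF (trialM (uniformBin m hm) p hp) n).map fun C => {x} + A + C

/-- A `{0,1}`-valued Bernoulli random variable with success probability `q`, as a `PMF ℕ`. -/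
noncomputable def bernoulliNat (q : ℝ≥0∞) (h : q ≤ 1) : PMF ℕ :=
  (bernoulliENNReal q h).map (fun b => if b then 1 else 0)

/-- The `Binomial(N, q)` distribution, built as a sum of `N` independent Bernoulli's. -/
noncomputable def binomialNat (q : ℝ≥0∞) (h : q ≤ 1) : ℕ → PMF ℕ
  | 0 => PMF.pure 0
  | N + 1 => (bernoulliNat q h).bind fun a => (binomialNat q h N).map (a + ·)

lemma PMF.toOuterMeasure_apply_le_one {α : Type*} (ν : PMF α) (s : Set α) :
    ν.toOuterMeasure s ≤ 1 :=
  (MeasureTheory.measure_mono (Set.subset_univ s)).trans_eq <|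
    (ν.toOuterMeasure_apply_eq_one_iff _).mpr (Set.subset_univ _)

lemma ENNReal.ofReal_natCast_div_natCast {a b : ℕ} (hb : 0 < b) :
    ENNReal.ofReal ((a : ℝ) / b) = (a : ℝ≥0∞) / b := by
  rw [ENNReal.ofReal_div_of_pos (Nat.cast_pos.mpr hb), ENNReal.ofReal_natCast,
    ENNReal.ofReal_natCast]

lemma eq_bernoulliENNReal_iff {q : ℝ≥0∞} (hq : q ≤ 1) (μ : PMF Bool) :
    μ = bernoulliENNReal q hq ↔ μ true = q := by
  refine ⟨fun h => by simp [h, bernoulliENNReal], fun h => PMF.ext fun b => ?_⟩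
  have hsum : μ false + μ true = 1 := by rw [add_comm]; simpa [tsum_bool] using μ.tsum_coe
  cases b
  · simpa [bernoulliENNReal, ← h] using ENNReal.eq_sub_of_add_eq (μ.apply_ne_top true) hsum
  · simpa [bernoulliENNReal] using h

lemma bernoulliENNReal_bind_ite {p q : ℝ≥0∞} (hp : p ≤ 1) (hq : q ≤ 1) :
    ((bernoulliENNReal p hp).bind fun b => if b then bernoulliENNReal q hq else PMF.pure false) =
      bernoulliENNReal (p * q) (mul_le_one' hp hq) := by
  rw [eq_bernoulliENNReal_iff, PMF.bind_apply, tsum_bool]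
  simp [bernoulliENNReal]

lemma bernoulliNat_one (h : (1 : ℝ≥0∞) ≤ 1) : bernoulliNat 1 h = PMF.pure 1 := by
  rw [bernoulliNat, ← (eq_bernoulliENNReal_iff h (PMF.pure true)).mpr (by simp), PMF.pure_map]
  rfl

lemma Multiset.countP_singleton {α : Type*} (P : α → Prop) [DecidablePred P] (x : α) :
    Multiset.countP P {x} = if P x then 1 else 0 := by
  simp [← Multiset.cons_zero, Multiset.countP_cons]

lemma Finset.sum_count_eq_countP_mem {α : Type*} [DecidableEq α] (T : Finset α)
    (o : Multiset α) : ∑ i ∈ T, o.count i = o.countP (· ∈ T) := by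
  induction o using Multiset.induction_on with
  | empty => simp
  | cons a o ih => simp [Multiset.count_cons, Finset.sum_add_distrib, ih, Multiset.countP_cons]

section CountP

variable {α : Type*} (ν : PMF α) (P : α → Prop) [DecidablePred P]

lemma PMF.map_decide_eq_bernoulliENNReal :
    ν.map (fun x => decide (P x)) =
      bernoulliENNReal (ν.toOuterMeasure {x | P x}) (ν.toOuterMeasure_apply_le_one _) := by
  rw [eq_bernoulliENNReal_iff, ← PMF.toOuterMeasure_apply_singleton, PMF.toOuterMeasure_map_apply]
  congr 1
  ext x
  simp

lemma PMF.map_singleton_map_countP :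
    (ν.map fun x => ({x} : Multiset α)).map (Multiset.countP P) =
      bernoulliNat (ν.toOuterMeasure {x | P x}) (ν.toOuterMeasure_apply_le_one _) := by
  rw [bernoulliNat, ← ν.map_decide_eq_bernoulliENNReal, PMF.map_comp, PMF.map_comp]
  congr 1
  funext x
  by_cases hx : P x <;> simp [hx, Multiset.countP_singleton]

lemma trialM_map_countP {p : ℝ≥0∞} (hp : p ≤ 1) :
    (trialM ν p hp).map (Multiset.countP P) =
      bernoulliNat (p * ν.toOuterMeasure {x | P x})
        (mul_le_one' hp (ν.toOuterMeasure_apply_le_one _)) := by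
  rw [trialM, PMF.map_bind, bernoulliNat,
    ← bernoulliENNReal_bind_ite hp (ν.toOuterMeasure_apply_le_one _), PMF.map_bind]
  congr 1
  funext b
  cases b
  · simp [PMF.pure_map]
  · simpa [bernoulliNat] using ν.map_singleton_map_countP P

end CountP

lemma repeatPMF_map_eq_binomialNat {α : Type*} {ν : PMF (Multiset α)} (f : Multiset α →+ ℕ)
    {q : ℝ≥0∞} {h : q ≤ 1} (hν : ν.map f = bernoulliNat q h) (N : ℕ) :
    (repeatPMF ν N).map f = binomialNat q h N := by
  induction N with
  | zero => simp [repeatPMF, binomialNat, PMF.pure_map]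
  | succ N ih =>
    rw [repeatPMF, binomialNat, PMF.map_bind, ← hν, PMF.bind_map]
    congr 1
    funext s
    simp only [Function.comp_apply, ← ih, PMF.map_comp]
    congr 1
    funext t
    simp

lemma MBIB_map_addMonoidHom {m : ℕ} (k n : ℕ) (hm : 0 < m) {p : ℝ≥0∞} (hp : p ≤ 1)
    {S : Finset (Fin m)} (hS : S.Nonempty) (f : Multiset (Fin m) →+ ℕ) :
    (MBIB m k n hm p hp S hS).map f =
      ((PMF.uniformOfFinset S hS).map fun x => f {x}).bind fun z =>
        ((repeatPMF ((uniformBin m hm).map fun y => {y}) k).map f).bind fun a =>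
          ((repeatPMF (trialM (uniformBin m hm) p hp) n).map f).map fun b => z + a + b := by
  simp only [MBIB, PMF.map_bind, PMF.bind_map, PMF.map_comp, Function.comp_def, map_add]

theorem MBIB_map_countP {m : ℕ} (k n : ℕ) (hm : 0 < m) {p : ℝ≥0∞} (hp : p ≤ 1)
    {S : Finset (Fin m)} (hS : S.Nonempty) (P : Fin m → Prop) [DecidablePred P] :
    (MBIB m k n hm p hp S hS).map (Multiset.countP P) =
      (bernoulliNat ((PMF.uniformOfFinset S hS).toOuterMeasure {x | P x})
          (PMF.toOuterMeasure_apply_le_one _ _)).bind fun z =>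
        (binomialNat ((uniformBin m hm).toOuterMeasure {x | P x})
            (PMF.toOuterMeasure_apply_le_one _ _) k).bind fun a =>
          (binomialNat (p * (uniformBin m hm).toOuterMeasure {x | P x})
              (mul_le_one' hp (PMF.toOuterMeasure_apply_le_one _ _)) n).map fun b => z + a + b := by
  rw [← Multiset.coe_countPAddMonoidHom, MBIB_map_addMonoidHom,
    repeatPMF_map_eq_binomialNat _ ((uniformBin m hm).map_singleton_map_countP P),
    repeatPMF_map_eq_binomialNat _ (trialM_map_countP (uniformBin m hm) P hp),
    ← (PMF.uniformOfFinset S hS).map_singleton_map_countP, PMF.map_comp]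
  rfl

theorem stmt8 (m s k n : ℕ) (hm : 0 < m) (hs : 0 < s) (hsm : s ≤ m)
    (p : ℝ) (hp0 : 0 ≤ p) (hp1 : p ≤ 1)
    (S S' : Finset (Fin m)) (hScard : S.card = s) (hS'card : S'.card = s) :
    ((MBIB m k n hm (ENNReal.ofReal p) (ENNReal.ofReal_le_one.mpr hp1) S
        (Finset.card_pos.mp (hScard ▸ hs))).map (fun o => ∑ i ∈ S, o.count i) =
      (binomialNat (ENNReal.ofReal ((s : ℝ) / m))
          (ENNReal.ofReal_le_one.mpr
            (div_le_one_of_le₀ (Nat.cast_le.mpr hsm) (Nat.cast_nonneg m))) k).bind fun a =>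
        (binomialNat (ENNReal.ofReal (p * s / m))
            (ENNReal.ofReal_le_one.mpr
              (div_le_one_of_le₀
                (by nlinarith [(Nat.cast_le.mpr hsm : (s : ℝ) ≤ m), (Nat.cast_nonneg s : (0:ℝ) ≤ s)])
                (Nat.cast_nonneg m))) n).map fun b => 1 + a + b) ∧
    ((MBIB m k n hm (ENNReal.ofReal p) (ENNReal.ofReal_le_one.mpr hp1) S
        (Finset.card_pos.mp (hScard ▸ hs))).map (fun o => ∑ i ∈ S', o.count i) =
      (bernoulliNat (ENNReal.ofReal (((S ∩ S').card : ℝ) / s))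
          (ENNReal.ofReal_le_one.mpr
            (div_le_one_of_le₀
              (Nat.cast_le.mpr (hScard ▸ Finset.card_le_card Finset.inter_subset_left))
              (Nat.cast_nonneg s)))).bind fun z =>
        (binomialNat (ENNReal.ofReal ((s : ℝ) / m))
            (ENNReal.ofReal_le_one.mpr
              (div_le_one_of_le₀ (Nat.cast_le.mpr hsm) (Nat.cast_nonneg m))) k).bind fun a =>
          (binomialNat (ENNReal.ofReal (p * s / m))
              (ENNReal.ofReal_le_one.mpr
                (div_le_one_of_le₀
                  (by nlinarith [(Nat.cast_le.mpr hsm : (s : ℝ) ≤ m), (Nat.cast_nonneg s : (0:ℝ) ≤ s)])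
                  (Nat.cast_nonneg m))) n).map fun b => z + a + b) := by
  have hS : S.Nonempty := Finset.card_pos.mp (hScard ▸ hs)
  have hstat : ∀ T : Finset (Fin m), (fun o : Multiset (Fin m) => ∑ i ∈ T, o.count i) =
      Multiset.countP (· ∈ T) := fun T => funext (T.sum_count_eq_countP_mem)
  have hunif : ∀ T : Finset (Fin m), T.card = s →
      (uniformBin m hm).toOuterMeasure {x | x ∈ T} = ENNReal.ofReal ((s : ℝ) / m) := by
    intro T hT
    rw [uniformBin, PMF.toOuterMeasure_uniformOfFinset_apply]
    simp [hT, ENNReal.ofReal_natCast_div_natCast hm]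
  have hsample : ∀ T : Finset (Fin m), (PMF.uniformOfFinset S hS).toOuterMeasure {x | x ∈ T} =
      ENNReal.ofReal (((S ∩ T).card : ℝ) / s) := by
    intro T
    rw [PMF.toOuterMeasure_uniformOfFinset_apply]
    simp [Finset.filter_mem_eq_inter, hScard, ENNReal.ofReal_natCast_div_natCast hs]
  have hrate : ENNReal.ofReal p * ENNReal.ofReal ((s : ℝ) / m) = ENNReal.ofReal (p * s / m) := by
    rw [← ENNReal.ofReal_mul hp0, mul_div_assoc]
  have hself : ENNReal.ofReal (((S ∩ S).card : ℝ) / s) = 1 := by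
    rw [Finset.inter_self, hScard, div_self (by positivity), ENNReal.ofReal_one]
  simp only [hstat, MBIB_map_countP, hunif S hScard, hunif S' hS'card, hsample, hrate, hself,
    bernoulliNat_one, PMF.pure_bind, and_self]
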